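/- For every λ ∈ ℚ with λ ≠ 0 and all words u, v ∈ L*: Δ̄_λ(u ⧢_λ v) − Δ̄_λ(u) ⧢_λ Δ̄_λ(v) ∈ T_- ⊗ ℚ⟨L⟩ + ℚ⟨L⟩ ⊗ T_-. (Consequently the quotient H_λ = ℚ⟨L⟩/T_- with the induced product ⧢_λ and coproduct Δ_λ is a bialgebra, and being graded and connected, a Hopf algebra.) -/

import Mathlib

open scoped TensorProduct

/-- The two-letter alphabet `L = {d, y}`. -/
inductive Letter : Type
  | d : Letter
  | y : Letter
deriving DecidableEq

/-- `ℚ⟨L⟩`, the ℚ-vector space with basis the words on `L` (with the concatenation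
product, it is the free noncommutative ℚ-algebra on `L`). -/
abbrev V : Type := MonoidAlgebra ℚ (FreeMonoid Letter)

/-- The basis vector corresponding to a word. -/
noncomputable def wrd (w : List Letter) : V :=
  MonoidAlgebra.single (FreeMonoid.ofList w) (1 : ℚ)

/-- The shuffle-type product `⧢_λ` on basis words, defined recursively by
(P1) `e ⧢ w = w ⧢ e = w`; (P2) `(yu) ⧢ v = u ⧢ (yv) = y(u ⧢ v)`;
(P3) `(du) ⧢ (dv) = (1/λ)(d(u ⧢ v) − (du) ⧢ v − u ⧢ (dv))`. -/
noncomputable def shW (lam : ℚ) : List Letter → List Letter → V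
  | [], v => wrd v
  | u@(_ :: _), [] => wrd u
  | (Letter.y :: u), v => wrd [Letter.y] * shW lam u v
  | (Letter.d :: u), (Letter.y :: v) => wrd [Letter.y] * shW lam (Letter.d :: u) v
  | (Letter.d :: u), (Letter.d :: v) =>
      lam⁻¹ • (wrd [Letter.d] * shW lam u v
        - shW lam (Letter.d :: u) v - shW lam u (Letter.d :: v))
termination_by u v => u.length + v.length

/-- The ℚ-bilinear extension of `⧢_λ` to `ℚ⟨L⟩`. -/
noncomputable def shL (lam : ℚ) : V →ₗ[ℚ] V →ₗ[ℚ] V :=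
  (Finsupp.lsum ℚ fun u => LinearMap.toSpanSingleton ℚ (V →ₗ[ℚ] V)
    ((Finsupp.lsum ℚ fun v =>
      LinearMap.toSpanSingleton ℚ V (shW lam (FreeMonoid.toList u) (FreeMonoid.toList v)))
      ∘ₗ (MonoidAlgebra.coeffLinearEquiv ℚ).toLinearMap))
    ∘ₗ (MonoidAlgebra.coeffLinearEquiv ℚ).toLinearMap

/-- The values of `Δ̄_λ` on letters: `Δ̄_λ(y) = e⊗y + y⊗e`,
`Δ̄_λ(d) = e⊗d + d⊗e + λ·(d⊗d)`. -/
noncomputable def dval (lam : ℚ) : Letter → (V ⊗[ℚ] V)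
  | Letter.y => 1 ⊗ₜ wrd [Letter.y] + wrd [Letter.y] ⊗ₜ 1
  | Letter.d => 1 ⊗ₜ wrd [Letter.d] + wrd [Letter.d] ⊗ₜ 1
      + lam • (wrd [Letter.d] ⊗ₜ wrd [Letter.d])

/-- `Δ̄_λ : ℚ⟨L⟩ → ℚ⟨L⟩ ⊗ ℚ⟨L⟩`, the unique morphism of unital ℚ-algebras
(concatenation product on the source, componentwise concatenation on the tensor square)
with the prescribed values on the letters. -/
noncomputable def Delta (lam : ℚ) : V →ₐ[ℚ] (V ⊗[ℚ] V) :=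
  MonoidAlgebra.lift ℚ (V ⊗[ℚ] V) (FreeMonoid Letter) (FreeMonoid.lift (dval lam))

/-- The componentwise extension of `⧢_λ` to `ℚ⟨L⟩ ⊗ ℚ⟨L⟩`:
`(a⊗b) ⧢ (c⊗d) = (a ⧢ c) ⊗ (b ⧢ d)`. -/
noncomputable def shT (lam : ℚ) (x z : V ⊗[ℚ] V) : V ⊗[ℚ] V :=
  (TensorProduct.map (TensorProduct.lift (shL lam)) (TensorProduct.lift (shL lam)))
    ((TensorProduct.tensorTensorTensorComm ℚ V V V V) (x ⊗ₜ z))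

/-- `T₋ ⊆ ℚ⟨L⟩`: the span of the words ending in the letter `d`. -/
noncomputable def Tneg : Submodule ℚ V :=
  Submodule.span ℚ {x : V | ∃ w : List Letter, x = wrd (w ++ [Letter.d])}

/-!
`Δ̄_λ` is in fact a morphism for `⧢_λ` on the nose, so the difference vanishes. Rule (P3) says
exactly that left multiplication by `1 + λd` is a `⧢_λ`-endomorphism, and
`1 ⊗ 1 + λ Δ̄_λ(d) = (1 + λd) ⊗ (1 + λd)`, so left multiplication by `1 + λ Δ̄_λ(d)` is a
`⧢_λ`-endomorphism of the tensor square. Left multiplication by `y` commutes with `⧢_λ` in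
each argument and `Δ̄_λ(y)` is primitive. Induction along the recursion defining `⧢_λ`
then shows `Δ̄_λ(u ⧢_λ v) = Δ̄_λ(u) ⧢_λ Δ̄_λ(v)`.
-/

open Letter

lemma wrd_cons (l : Letter) (u : List Letter) : wrd (l :: u) = wrd [l] * wrd u := by
  simp only [wrd, MonoidAlgebra.single_mul_single, one_mul]
  rfl

lemma wrd_nil : wrd [] = 1 := rfl

lemma shL_wrd (lam : ℚ) (u v : List Letter) : shL lam (wrd u) (wrd v) = shW lam u v := by
  simp [shL, wrd]

lemma Delta_wrd_singleton (lam : ℚ) (l : Letter) : Delta lam (wrd [l]) = dval lam l := by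
  simp [Delta, wrd]

lemma Delta_cons (lam : ℚ) (l : Letter) (u : List Letter) :
    Delta lam (wrd (l :: u)) = dval lam l * Delta lam (wrd u) := by
  rw [wrd_cons, map_mul, Delta_wrd_singleton]

lemma linearMap_ext_wrd {M : Type*} [AddCommMonoid M] [Module ℚ M] {f g : V →ₗ[ℚ] M}
    (h : ∀ w, f (wrd w) = g (wrd w)) : f = g :=
  (MonoidAlgebra.basis _ ℚ).ext fun w => by simpa [wrd] using h w.toList

lemma linearMap_ext_wrd₂ {M : Type*} [AddCommMonoid M] [Module ℚ M] {f g : V →ₗ[ℚ] V →ₗ[ℚ] M}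
    (h : ∀ u v, f (wrd u) (wrd v) = g (wrd u) (wrd v)) : f = g :=
  LinearMap.ext_basis (MonoidAlgebra.basis _ ℚ) (MonoidAlgebra.basis _ ℚ) fun u v => by
    simpa [wrd] using h u.toList v.toList

section Shuffle

variable (lam : ℚ)

lemma shW_nil_right (u : List Letter) : shW lam u [] = wrd u := by
  cases u <;> rw [shW]

lemma shW_y_left (u v : List Letter) : shW lam (y :: u) v = wrd [y] * shW lam u v := by
  cases v with
  | nil => cases u <;> simp [shW, ← wrd_cons]
  | cons a w => rw [shW]; simp

lemma shW_y_right (u v : List Letter) : shW lam u (y :: v) = wrd [y] * shW lam u v := by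
  induction u with
  | nil => rw [shW, shW, wrd_cons]
  | cons a w ih =>
    cases a with
    | d => rw [shW]
    | y => rw [shW_y_left, shW_y_left, ih]

lemma shL_mul_mul_of_wrd {a a' a'' : V}
    (h : ∀ u v, shL lam (a * wrd u) (a' * wrd v) = a'' * shL lam (wrd u) (wrd v)) (x z : V) :
    shL lam (a * x) (a' * z) = a'' * shL lam x z := by
  have hbil : (shL lam).compl₁₂ (LinearMap.mulLeft ℚ a) (LinearMap.mulLeft ℚ a') =
      (shL lam).compr₂ (LinearMap.mulLeft ℚ a'') :=
    linearMap_ext_wrd₂ fun u v => by simpa using h u v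
  exact LinearMap.congr_fun₂ hbil x z

lemma shL_y_mul_left (x z : V) : shL lam (wrd [y] * x) z = wrd [y] * shL lam x z := by
  simpa using shL_mul_mul_of_wrd lam (a' := 1)
    (fun u v => by rw [one_mul, ← wrd_cons, shL_wrd, shL_wrd, shW_y_left]) x z

lemma shL_y_mul_right (x z : V) : shL lam x (wrd [y] * z) = wrd [y] * shL lam x z := by
  simpa using shL_mul_mul_of_wrd lam (a := 1)
    (fun u v => by rw [one_mul, ← wrd_cons, shL_wrd, shL_wrd, shW_y_right]) x z

lemma shL_one_add_smul_d_mul (hlam : lam ≠ 0) (x z : V) :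
    shL lam ((1 + lam • wrd [d]) * x) ((1 + lam • wrd [d]) * z) =
      (1 + lam • wrd [d]) * shL lam x z := by
  refine shL_mul_mul_of_wrd lam (fun u v => ?_) x z
  have hP3 : lam • shW lam (d :: u) (d :: v) =
      wrd [d] * shW lam u v - shW lam (d :: u) v - shW lam u (d :: v) := by
    rw [shW, smul_inv_smul₀ hlam]
  simp only [add_mul, one_mul, smul_mul_assoc, ← wrd_cons, map_add, map_smul,
    LinearMap.add_apply, LinearMap.smul_apply, shL_wrd]
  linear_combination (norm := module) lam • hP3

lemma shL_one_left (x : V) : shL lam 1 x = x := by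
  have h : shL lam 1 = LinearMap.id := linearMap_ext_wrd fun w => by
    rw [← wrd_nil, shL_wrd, shW, LinearMap.id_apply]
  rw [h, LinearMap.id_apply]

lemma shL_one_right (x : V) : shL lam x 1 = x := by
  have h : (shL lam).flip 1 = LinearMap.id := linearMap_ext_wrd fun w => by
    rw [LinearMap.flip_apply, ← wrd_nil, shL_wrd, shW_nil_right, LinearMap.id_apply]
  rw [← LinearMap.flip_apply, h, LinearMap.id_apply]

end Shuffle

noncomputable def shTBilin (lam : ℚ) : V ⊗[ℚ] V →ₗ[ℚ] V ⊗[ℚ] V →ₗ[ℚ] V ⊗[ℚ] V :=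
  (TensorProduct.mk ℚ _ _).compr₂
    (TensorProduct.map (TensorProduct.lift (shL lam)) (TensorProduct.lift (shL lam)) ∘ₗ
      (TensorProduct.tensorTensorTensorComm ℚ V V V V).toLinearMap)

section TensorShuffle

variable (lam : ℚ)

lemma shT_eq_shTBilin (s t : V ⊗[ℚ] V) : shT lam s t = shTBilin lam s t := rfl

lemma shT_tmul (a b c e : V) : shT lam (a ⊗ₜ b) (c ⊗ₜ e) = shL lam a c ⊗ₜ shL lam b e := by
  simp [shT, TensorProduct.tensorTensorTensorComm_tmul]

lemma shT_one_left (t : V ⊗[ℚ] V) : shT lam 1 t = t := by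
  have h : shTBilin lam 1 = LinearMap.id := TensorProduct.ext' fun c e => by
    rw [← shT_eq_shTBilin, Algebra.TensorProduct.one_def, shT_tmul, shL_one_left, shL_one_left,
      LinearMap.id_apply]
  rw [shT_eq_shTBilin, h, LinearMap.id_apply]

lemma shT_one_right (s : V ⊗[ℚ] V) : shT lam s 1 = s := by
  have h : (shTBilin lam).flip 1 = LinearMap.id := TensorProduct.ext' fun a b => by
    rw [LinearMap.flip_apply, ← shT_eq_shTBilin, Algebra.TensorProduct.one_def, shT_tmul,
      shL_one_right, shL_one_right, LinearMap.id_apply]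
  rw [shT_eq_shTBilin, ← LinearMap.flip_apply, h, LinearMap.id_apply]

lemma shT_tmul_mul_tmul_mul {a a' a'' b b' b'' : V}
    (ha : ∀ x z, shL lam (a * x) (a' * z) = a'' * shL lam x z)
    (hb : ∀ x z, shL lam (b * x) (b' * z) = b'' * shL lam x z) (s t : V ⊗[ℚ] V) :
    shT lam (a ⊗ₜ b * s) (a' ⊗ₜ b' * t) = a'' ⊗ₜ b'' * shT lam s t := by
  have hbil :
      (shTBilin lam).compl₁₂ (LinearMap.mulLeft ℚ (a ⊗ₜ b)) (LinearMap.mulLeft ℚ (a' ⊗ₜ b')) =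
        (shTBilin lam).compr₂ (LinearMap.mulLeft ℚ (a'' ⊗ₜ b'')) :=
    TensorProduct.ext' fun x x' => TensorProduct.ext' fun z z' => by
      simp only [LinearMap.compl₁₂_apply, LinearMap.compr₂_apply, LinearMap.mulLeft_apply,
        Algebra.TensorProduct.tmul_mul_tmul, ← shT_eq_shTBilin, shT_tmul, ha, hb]
  exact LinearMap.congr_fun₂ hbil s t

lemma shT_dval_y_left (s t : V ⊗[ℚ] V) :
    shT lam (dval lam y * s) t = dval lam y * shT lam s t := by
  have h1 : ∀ x z, shL lam (1 * x) (1 * z) = 1 * shL lam x z := by simp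
  have hy : ∀ x z, shL lam (wrd [y] * x) (1 * z) = wrd [y] * shL lam x z := by
    simp [shL_y_mul_left]
  have h1y := shT_tmul_mul_tmul_mul lam h1 hy s t
  have hy1 := shT_tmul_mul_tmul_mul lam hy h1 s t
  rw [← Algebra.TensorProduct.one_def, one_mul] at h1y hy1
  rw [dval, add_mul, add_mul, ← h1y, ← hy1]
  exact (shTBilin lam).map_add₂ _ _ t

lemma shT_dval_y_right (s t : V ⊗[ℚ] V) :
    shT lam s (dval lam y * t) = dval lam y * shT lam s t := by
  have h1 : ∀ x z, shL lam (1 * x) (1 * z) = 1 * shL lam x z := by simp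
  have hy : ∀ x z, shL lam (1 * x) (wrd [y] * z) = wrd [y] * shL lam x z := by
    simp [shL_y_mul_right]
  have h1y := shT_tmul_mul_tmul_mul lam h1 hy s t
  have hy1 := shT_tmul_mul_tmul_mul lam hy h1 s t
  rw [← Algebra.TensorProduct.one_def, one_mul] at h1y hy1
  rw [dval, add_mul, add_mul, ← h1y, ← hy1]
  exact map_add (shTBilin lam s) _ _

lemma one_add_smul_dval_d :
    1 + lam • dval lam d = (1 + lam • wrd [d]) ⊗ₜ (1 + lam • wrd [d]) := by
  simp only [dval, Algebra.TensorProduct.one_def, TensorProduct.add_tmul, TensorProduct.tmul_add,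
    ← TensorProduct.smul_tmul', TensorProduct.tmul_smul]
  module

lemma shT_dval_d (hlam : lam ≠ 0) (s t : V ⊗[ℚ] V) :
    lam • shT lam (dval lam d * s) (dval lam d * t) =
      dval lam d * shT lam s t - shT lam (dval lam d * s) t - shT lam s (dval lam d * t) := by
  have hσ := shT_tmul_mul_tmul_mul lam (shL_one_add_smul_d_mul lam hlam)
    (shL_one_add_smul_d_mul lam hlam) s t
  simp only [← one_add_smul_dval_d, add_mul, one_mul, smul_mul_assoc, shT_eq_shTBilin, map_add,
    map_smul, LinearMap.add_apply, LinearMap.smul_apply] at hσ ⊢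
  apply smul_right_injective _ hlam
  linear_combination (norm := module) hσ

end TensorShuffle

lemma Delta_shW (lam : ℚ) (hlam : lam ≠ 0) (u v : List Letter) :
    Delta lam (shW lam u v) = shT lam (Delta lam (wrd u)) (Delta lam (wrd v)) := by
  induction u, v using shW.induct with
  | case1 v => rw [shW, wrd_nil, map_one, shT_one_left]
  | case2 l u => rw [shW_nil_right, wrd_nil, map_one, shT_one_right]
  | case3 u v _ ih =>
    rw [shW_y_left, map_mul, Delta_wrd_singleton, ih, Delta_cons, shT_dval_y_left]
  | case4 u v ih =>
    rw [shW, map_mul, Delta_wrd_singleton, ih, Delta_cons lam y, shT_dval_y_right]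
  | case5 u v ih ihd ihd' =>
    rw [shW, map_smul, map_sub, map_sub, map_mul, Delta_wrd_singleton, ih, ihd, ihd',
      Delta_cons lam d u, Delta_cons lam d v, ← shT_dval_d lam hlam, inv_smul_smul₀ hlam]

/-- For `λ ≠ 0` and words `u, v`:
`Δ̄_λ(u ⧢_λ v) − Δ̄_λ(u) ⧢_λ Δ̄_λ(v) ∈ T₋ ⊗ ℚ⟨L⟩ + ℚ⟨L⟩ ⊗ T₋`. -/
theorem stmt_12 (lam : ℚ) (hlam : lam ≠ 0) (u v : List Letter) :
    Delta lam (shL lam (wrd u) (wrd v)) -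
        shT lam (Delta lam (wrd u)) (Delta lam (wrd v)) ∈
      LinearMap.range (TensorProduct.map Tneg.subtype (LinearMap.id : V →ₗ[ℚ] V)) ⊔
        LinearMap.range (TensorProduct.map (LinearMap.id : V →ₗ[ℚ] V) Tneg.subtype) := by
  rw [shL_wrd, Delta_shW lam hlam, sub_self]
  exact zero_mem _
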